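/- arXiv:1609.09810 — 8 statements merged into one kernel-verified Lean document; each statement's English description precedes it below -/
import Mathlib

section
/- Let R be a ring with finitely generated additive group, and define Δ(R) = Is(R²) ∩ Ann(R). Then the quotient group Ann(R)/Δ(R) is a free abelian group, and consequently Δ(R) has a direct complement in Ann(R). -/
/-!
`Δ(R) = Is(R²) ∩ Ann(R)` is cut out of `Ann(R)` by an isolated subgroup, so `Ann(R)/Δ(R)` is
torsion-free. It is finitely generated because `R` is, hence free, hence projective, and a section
of the quotient map `Ann(R) → Ann(R)/Δ(R)` splits off a complement of `Δ(R)`.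
-/

/-- The ideal (additive subgroup) generated by all products in `R`. -/
def sqIdeal (R : Type*) [NonUnitalNonAssocRing R] : AddSubgroup R :=
  AddSubgroup.closure {z : R | ∃ x y : R, z = x * y}

/-- The two-sided annihilator of `R` as an additive subgroup. -/
def ann (R : Type*) [NonUnitalNonAssocRing R] : AddSubgroup R where
  carrier := {x : R | ∀ y : R, x * y = 0 ∧ y * x = 0}
  zero_mem' := fun y => ⟨zero_mul y, mul_zero y⟩
  add_mem' := by
    intro a b ha hb y
    exact ⟨by rw [add_mul, (ha y).1, (hb y).1, add_zero],
      by rw [mul_add, (ha y).2, (hb y).2, add_zero]⟩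
  neg_mem' := by
    intro a ha y
    exact ⟨by rw [neg_mul, (ha y).1, neg_zero], by rw [mul_neg, (ha y).2, neg_zero]⟩

/-- The isolator `Is(I) = {x : ∃ n ≠ 0, n • x ∈ I}` of an additive subgroup. -/
def isolator {R : Type*} [AddCommGroup R] (I : AddSubgroup R) : AddSubgroup R where
  carrier := {x : R | ∃ n : ℤ, n ≠ 0 ∧ n • x ∈ I}
  zero_mem' := ⟨1, one_ne_zero, by simpa using I.zero_mem⟩
  add_mem' := by
    rintro a b ⟨n, hn, ha⟩ ⟨m, hm, hb⟩
    refine ⟨n * m, mul_ne_zero hn hm, ?_⟩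
    rw [smul_add]
    exact AddSubgroup.add_mem _
      (by rw [mul_comm, mul_smul]; exact AddSubgroup.zsmul_mem _ ha m)
      (by rw [mul_smul]; exact AddSubgroup.zsmul_mem _ hb n)
  neg_mem' := by
    rintro a ⟨n, hn, ha⟩
    exact ⟨n, hn, by rw [smul_neg]; exact AddSubgroup.neg_mem _ ha⟩

section

variable {G : Type*} [AddCommGroup G]

theorem mem_isolator_of_zsmul_mem {I : AddSubgroup G} {n : ℤ} {x : G} (hn : n ≠ 0)
    (hx : n • x ∈ isolator I) : x ∈ isolator I := by
  obtain ⟨m, hm, hmx⟩ := hx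
  exact ⟨m * n, mul_ne_zero hm hn, by rwa [mul_smul]⟩

theorem AddSubgroup.isTorsionFree_quotient {H : AddSubgroup G}
    (hH : ∀ (n : ℤ) (x : G), n ≠ 0 → n • x ∈ H → x ∈ H) : Module.IsTorsionFree ℤ (G ⧸ H) := by
  refine .of_smul_eq_zero fun n q hnq => or_iff_not_imp_left.mpr fun hn => ?_
  induction q using QuotientAddGroup.induction_on with
  | H x =>
    rw [← QuotientAddGroup.mk_zsmul, QuotientAddGroup.eq_zero_iff] at hnq
    exact (QuotientAddGroup.eq_zero_iff x).mpr (hH n x hn hnq)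

theorem isTorsionFree_quotient_isolator_inf (I A : AddSubgroup G) :
    Module.IsTorsionFree ℤ (A ⧸ (isolator I ⊓ A).addSubgroupOf A) :=
  AddSubgroup.isTorsionFree_quotient fun _ x hn hnx =>
    ⟨mem_isolator_of_zsmul_mem hn (AddSubgroup.mem_addSubgroupOf.mp hnx).1, x.2⟩

theorem Submodule.exists_isCompl_of_projective_quotient {R M : Type*} [Ring R] [AddCommGroup M]
    [Module R M] (p : Submodule R M) [Module.Projective R (M ⧸ p)] :
    ∃ q : Submodule R M, IsCompl p q := by
  obtain ⟨s, hs⟩ := Module.projective_lifting_property p.mkQ LinearMap.id p.mkQ_surjective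
  -- `x ↦ x - s (x mod p)` is a projection onto `p`; its kernel is the image of the section `s`.
  set π : M →ₗ[R] M := LinearMap.id - s ∘ₗ p.mkQ
  have hπ : ∀ x, π x ∈ p := fun x => by
    rw [← Submodule.Quotient.mk_eq_zero, ← p.mkQ_apply, ← LinearMap.comp_apply, LinearMap.comp_sub,
      ← LinearMap.comp_assoc, hs]
    simp
  refine ⟨LinearMap.ker (π.codRestrict p hπ), LinearMap.isCompl_of_proj fun x => Subtype.ext ?_⟩
  simp [π, (Submodule.Quotient.mk_eq_zero p).mpr x.2]

theorem AddSubgroup.exists_isCompl_of_projective_quotient (H : AddSubgroup G)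
    [Module.Projective ℤ (G ⧸ H)] : ∃ K : AddSubgroup G, IsCompl H K := by
  have : Module.Projective ℤ (G ⧸ H.toIntSubmodule) := ‹_›
  obtain ⟨q, hq⟩ := H.toIntSubmodule.exists_isCompl_of_projective_quotient
  refine ⟨AddSubgroup.toIntSubmodule.symm q, AddSubgroup.toIntSubmodule.isCompl_iff.mpr ?_⟩
  rwa [OrderIso.apply_symm_apply]

theorem AddSubgroup.map_subtype_addSubgroupOf_of_le {H A : AddSubgroup G} (hHA : H ≤ A) :
    (H.addSubgroupOf A).map A.subtype = H := by
  rw [addSubgroupOf_map_subtype, inf_eq_left.mpr hHA]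

theorem AddSubgroup.inf_map_subtype_eq_bot {H A : AddSubgroup G} {K : AddSubgroup A}
    (hHA : H ≤ A) (hK : Disjoint (H.addSubgroupOf A) K) : H ⊓ K.map A.subtype = ⊥ := by
  rw [← map_subtype_addSubgroupOf_of_le hHA, ← map_inf _ _ _ A.subtype_injective, hK.eq_bot,
    map_bot]

theorem AddSubgroup.sup_map_subtype_eq {H A : AddSubgroup G} {K : AddSubgroup A}
    (hHA : H ≤ A) (hK : Codisjoint (H.addSubgroupOf A) K) : H ⊔ K.map A.subtype = A := by
  rw [← map_subtype_addSubgroupOf_of_le hHA, ← map_sup, hK.eq_top, ← AddMonoidHom.range_eq_map,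
    range_subtype]

end

/-- `Ann(R)/Δ(R)` is free abelian, where `Δ(R) = Is(R²) ⊓ Ann(R)`; consequently
`Δ(R)` has a direct complement in `Ann(R)`. -/
theorem ann_mod_delta_free (R : Type*) [NonUnitalNonAssocRing R]
    (hR : AddGroup.FG R) :
    Module.Free ℤ ((ann R) ⧸ ((isolator (sqIdeal R) ⊓ ann R).addSubgroupOf (ann R))) ∧
    ∃ K : AddSubgroup R, K ≤ ann R ∧
      (isolator (sqIdeal R) ⊓ ann R) ⊓ K = ⊥ ∧
      (isolator (sqIdeal R) ⊓ ann R) ⊔ K = ann R := by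
  set Δ := (isolator (sqIdeal R) ⊓ ann R).addSubgroupOf (ann R)
  have : Module.Finite ℤ R := Module.Finite.iff_addGroup_fg.mpr hR
  have : Module.Finite ℤ (ann R) := inferInstanceAs (Module.Finite ℤ (ann R).toIntSubmodule)
  have : Module.Finite ℤ (ann R ⧸ Δ) := inferInstanceAs (Module.Finite ℤ (ann R ⧸ Δ.toIntSubmodule))
  have : Module.IsTorsionFree ℤ (ann R ⧸ Δ) := isTorsionFree_quotient_isolator_inf _ _
  have hfree : Module.Free ℤ (ann R ⧸ Δ) := Module.free_of_finite_type_torsion_free'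
  obtain ⟨K, hK⟩ := Δ.exists_isCompl_of_projective_quotient
  exact ⟨hfree, K.map (ann R).subtype, AddSubgroup.map_subtype_le K,
    AddSubgroup.inf_map_subtype_eq_bot inf_le_right hK.disjoint,
    AddSubgroup.sup_map_subtype_eq inf_le_right hK.codisjoint⟩
end

section
/- Let A be an integral domain whose additive group is finitely generated. Then A has characteristic 0 if and only if 2 ≠ 0 in A and 2 is not invertible in A. -/
/-!
If `2` were a unit in `A`, then `2 • A = A`, so Nakayama's lemma over `ℤ` gives an odd (hence
nonzero) integer annihilating `A`, which is impossible in characteristic `0`. Conversely, a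
domain of nonzero characteristic has prime characteristic `p`, and then `2` is either zero
(`p = 2`) or invertible (`p` odd).
-/

theorem not_charZero_of_isUnit_natCast {A : Type*} [CommRing A] [Module.Finite ℤ A] {n : ℕ}
    (hn : n ≠ 1) (hu : IsUnit (n : A)) : ¬ CharZero A := by
  intro hchar
  obtain ⟨v, hv⟩ := hu
  have htop_le : (⊤ : Submodule ℤ A) ≤ Ideal.span {(n : ℤ)} • ⊤ := by
    intro a _
    have ha : a = (n : ℤ) • (↑v⁻¹ * a) := by
      rw [zsmul_eq_mul, Int.cast_natCast, ← hv, ← mul_assoc, Units.mul_inv, one_mul]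
    rw [ha]
    exact Submodule.smul_mem_smul (Ideal.mem_span_singleton_self _) Submodule.mem_top
  obtain ⟨r, hr, hann⟩ := Submodule.exists_sub_one_mem_and_smul_eq_zero_of_fg_of_le_smul
    _ ⊤ Module.Finite.fg_top htop_le
  have hr0 : r = 0 := by simpa using hann 1 Submodule.mem_top
  rw [hr0, zero_sub, Ideal.mem_span_singleton, dvd_neg] at hr
  exact hn (by exact_mod_cast Int.eq_one_of_dvd_one (Int.natCast_nonneg n) hr)

theorem CharP.natCast_eq_zero_or_isUnit {R : Type*} [Ring R] {p : ℕ} [CharP R p]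
    (hp : p.Prime) (n : ℕ) : (n : R) = 0 ∨ IsUnit (n : R) := by
  rw [CharP.cast_eq_zero_iff R p, CharP.isUnit_natCast_iff hp]
  exact em _

/-- an integral domain with finitely generated additive group has
characteristic 0 iff `2 ≠ 0` and `2` is not invertible. -/
theorem charZero_iff_two_ne_zero_not_unit (A : Type*) [CommRing A] [IsDomain A]
    (hA : AddGroup.FG A) :
    ringChar A = 0 ↔ (2 : A) ≠ 0 ∧ ¬ IsUnit (2 : A) := by
  constructor
  · intro hchar
    have : CharZero A := (CharP.ringChar_zero_iff_CharZero A).1 hchar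
    have : Module.Finite ℤ A := Module.Finite.iff_addGroup_fg.2 hA
    refine ⟨two_ne_zero, fun hu => ?_⟩
    exact not_charZero_of_isUnit_natCast (n := 2) (by norm_num) (by exact_mod_cast hu)
      inferInstance
  · rintro ⟨h2, hu⟩
    rcases CharP.char_is_prime_or_zero A (ringChar A) with hp | hp
    · have := CharP.natCast_eq_zero_or_isUnit (R := A) hp 2
      rw [Nat.cast_ofNat] at this
      tauto
    · exact hp
end

section
/- Let f : M₁ × M₂ → N be a full non-degenerate A-bilinear map over a commutative unital ring A (with M₁, M₂, N faithful A-modules). Then f admits a largest enrichment: there is a commutative ring P(f) containing A with respect to which f is P(f)-bilinear, such that every ring P with respect to which f admits an enrichment embeds into P(f) compatibly. -/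
/-!
The largest enrichment is the centroid of `f`: the ring of triples `(φ₁, φ₂, φ₀)` of `A`-linear
endomorphisms with `f (φ₁ x) y = φ₀ (f x y) = f x (φ₂ y)`. Every enrichment `P` maps into it by
`p ↦ (p •, p •, p •)`, injectively since `P` acts faithfully on `N`. Fullness makes `φ₀` determined
by `φ₁` (and by `φ₂`) on the generators `f x y`, and non-degeneracy makes `φ₁`, `φ₂` determined
by `φ₀`. Together they make the centroid act faithfully on each module and make it commutative:
`φ₀ ψ₀ f(x, y) = f(ψ₁ x, φ₂ y) = ψ₀ φ₀ f(x, y)`.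
-/

/-- An enrichment of an `A`-bilinear map `f : M₁ × M₂ → N` by a commutative ring `P ⊇ A`:
`P`-module structures on `M₁`, `M₂`, `N` (given by ring homomorphisms into the additive
endomorphism rings) extending the `A`-actions, keeping all three modules faithful and
making `f` `P`-bilinear. -/
structure BilinEnrichment (A : Type) [CommRing A]
    (M₁ M₂ N : Type) [AddCommGroup M₁] [AddCommGroup M₂] [AddCommGroup N]
    [Module A M₁] [Module A M₂] [Module A N]
    (f : M₁ →ₗ[A] M₂ →ₗ[A] N) where
  P : Type
  [instP : CommRing P]
  ι : A →+* P
  ι_inj : Function.Injective ι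
  e₁ : P →+* AddMonoid.End M₁
  e₂ : P →+* AddMonoid.End M₂
  e₀ : P →+* AddMonoid.End N
  e₁_inj : Function.Injective e₁
  e₂_inj : Function.Injective e₂
  e₀_inj : Function.Injective e₀
  compat₁ : ∀ (a : A) (x : M₁), e₁ (ι a) x = a • x
  compat₂ : ∀ (a : A) (y : M₂), e₂ (ι a) y = a • y
  compat₀ : ∀ (a : A) (z : N), e₀ (ι a) z = a • z
  bilin₁ : ∀ (p : P) (x : M₁) (y : M₂), f (e₁ p x) y = e₀ p (f x y)
  bilin₂ : ∀ (p : P) (x : M₁) (y : M₂), f x (e₂ p y) = e₀ p (f x y)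

attribute [instance] BilinEnrichment.instP

open Function

def Module.End.toAddMonoidEnd (R M : Type*) [Semiring R] [AddCommMonoid M] [Module R M] :
    Module.End R M →+* AddMonoid.End M where
  toFun := LinearMap.toAddMonoidHom
  map_one' := rfl
  map_mul' _ _ := rfl
  map_zero' := rfl
  map_add' _ _ := rfl

/-- Each `e p` is `A`-linear because it commutes with `e (ι a) = (a • ·)`, `P` being commutative. -/
def RingHom.toModuleEnd {A P M : Type*} [CommSemiring A] [CommSemiring P] [AddCommMonoid M]
    [Module A M] (ι : A →+* P) (e : P →+* AddMonoid.End M)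
    (h : ∀ (a : A) (x : M), e (ι a) x = a • x) : P →+* Module.End A M where
  toFun p :=
    { toFun := e p
      map_add' := map_add (e p)
      map_smul' := fun a x => by
        have hcomm : e p * e (ι a) = e (ι a) * e p := by rw [← map_mul, mul_comm, map_mul]
        rw [RingHom.id_apply, ← h, ← h]
        exact DFunLike.congr_fun hcomm x }
  map_one' := LinearMap.ext fun x => DFunLike.congr_fun (map_one e) x
  map_mul' p q := LinearMap.ext fun x => DFunLike.congr_fun (map_mul e p q) x
  map_zero' := LinearMap.ext fun x => DFunLike.congr_fun (map_zero e) x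
  map_add' p q := LinearMap.ext fun x => DFunLike.congr_fun (map_add e p q) x

section BilinCentroid

variable {A : Type} [CommRing A] {M₁ M₂ N : Type} [AddCommGroup M₁] [AddCommGroup M₂]
  [AddCommGroup N] [Module A M₁] [Module A M₂] [Module A N]

def bilinCentroid (f : M₁ →ₗ[A] M₂ →ₗ[A] N) :
    Subalgebra A (Module.End A M₁ × Module.End A M₂ × Module.End A N) where
  carrier := {t | (∀ x y, f (t.1 x) y = t.2.2 (f x y)) ∧ ∀ x y, f x (t.2.1 y) = t.2.2 (f x y)}
  mul_mem' := by
    rintro s t ⟨hs₁, hs₂⟩ ⟨ht₁, ht₂⟩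
    exact ⟨fun x y => (hs₁ _ y).trans (congrArg s.2.2 (ht₁ x y)),
      fun x y => (hs₂ x _).trans (congrArg s.2.2 (ht₂ x y))⟩
  add_mem' := by
    rintro s t ⟨hs₁, hs₂⟩ ⟨ht₁, ht₂⟩
    refine ⟨fun x y => ?_, fun x y => ?_⟩ <;> simp [hs₁, hs₂, ht₁, ht₂]
  algebraMap_mem' a := by
    refine ⟨fun x y => ?_, fun x y => ?_⟩ <;> simp

variable {f : M₁ →ₗ[A] M₂ →ₗ[A] N} {s t : Module.End A M₁ × Module.End A M₂ × Module.End A N}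

theorem bilinCentroid_ext (hnd₁ : ∀ x : M₁, (∀ y : M₂, f x y = 0) → x = 0)
    (hnd₂ : ∀ y : M₂, (∀ x : M₁, f x y = 0) → y = 0)
    (hs : s ∈ bilinCentroid f) (ht : t ∈ bilinCentroid f) (h : s.2.2 = t.2.2) : s = t := by
  have h₁ : s.1 = t.1 := LinearMap.ext fun x => sub_eq_zero.mp <| hnd₁ _ fun y => by
    rw [map_sub, LinearMap.sub_apply, hs.1, ht.1, h, sub_self]
  have h₂ : s.2.1 = t.2.1 := LinearMap.ext fun y => sub_eq_zero.mp <| hnd₂ _ fun x => by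
    rw [map_sub, hs.2, ht.2, h, sub_self]
  exact Prod.ext h₁ (Prod.ext h₂ h)

theorem bilinCentroid_snd_snd_eq_of_fst_eq
    (hfull : Submodule.span A (Set.range fun p : M₁ × M₂ => f p.1 p.2) = ⊤)
    (hs : s ∈ bilinCentroid f) (ht : t ∈ bilinCentroid f) (h : s.1 = t.1) : s.2.2 = t.2.2 :=
  LinearMap.ext_on_range hfull fun p => by rw [← hs.1, ← ht.1, h]

theorem bilinCentroid_snd_snd_eq_of_snd_fst_eq
    (hfull : Submodule.span A (Set.range fun p : M₁ × M₂ => f p.1 p.2) = ⊤)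
    (hs : s ∈ bilinCentroid f) (ht : t ∈ bilinCentroid f) (h : s.2.1 = t.2.1) :
    s.2.2 = t.2.2 :=
  LinearMap.ext_on_range hfull fun p => by rw [← hs.2, ← ht.2, h]

theorem bilinCentroid_mul_comm (hnd₁ : ∀ x : M₁, (∀ y : M₂, f x y = 0) → x = 0)
    (hnd₂ : ∀ y : M₂, (∀ x : M₁, f x y = 0) → y = 0)
    (hfull : Submodule.span A (Set.range fun p : M₁ × M₂ => f p.1 p.2) = ⊤)
    (hs : s ∈ bilinCentroid f) (ht : t ∈ bilinCentroid f) : s * t = t * s := by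
  refine bilinCentroid_ext hnd₁ hnd₂ (mul_mem hs ht) (mul_mem ht hs) ?_
  refine LinearMap.ext_on_range hfull fun p => ?_
  change s.2.2 (t.2.2 (f p.1 p.2)) = t.2.2 (s.2.2 (f p.1 p.2))
  rw [← ht.1, ← hs.2, ht.1, hs.2]

/-- Not an instance, since commutativity depends on `f` being non-degenerate and full. -/
abbrev bilinCentroid.commRing (hnd₁ : ∀ x : M₁, (∀ y : M₂, f x y = 0) → x = 0)
    (hnd₂ : ∀ y : M₂, (∀ x : M₁, f x y = 0) → y = 0)
    (hfull : Submodule.span A (Set.range fun p : M₁ × M₂ => f p.1 p.2) = ⊤) :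
    CommRing (bilinCentroid f) :=
  { (bilinCentroid f).toRing with
    mul_comm := fun s t => Subtype.ext (bilinCentroid_mul_comm hnd₁ hnd₂ hfull s.2 t.2) }

def bilinCentroid.enrichment [FaithfulSMul A M₁]
    (hnd₁ : ∀ x : M₁, (∀ y : M₂, f x y = 0) → x = 0)
    (hnd₂ : ∀ y : M₂, (∀ x : M₁, f x y = 0) → y = 0)
    (hfull : Submodule.span A (Set.range fun p : M₁ × M₂ => f p.1 p.2) = ⊤) :
    BilinEnrichment A M₁ M₂ N f :=
  letI := bilinCentroid.commRing hnd₁ hnd₂ hfull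
  let val := (bilinCentroid f).val.toRingHom
  { P := bilinCentroid f
    ι := algebraMap A (bilinCentroid f)
    ι_inj := fun _ _ h => eq_of_smul_eq_smul fun x : M₁ =>
      congrArg (fun t : bilinCentroid f => t.val.1 x) h
    e₁ := (Module.End.toAddMonoidEnd A M₁).comp ((RingHom.fst _ _).comp val)
    e₂ := (Module.End.toAddMonoidEnd A M₂).comp
      ((RingHom.fst _ _).comp ((RingHom.snd _ _).comp val))
    e₀ := (Module.End.toAddMonoidEnd A N).comp
      ((RingHom.snd _ _).comp ((RingHom.snd _ _).comp val))
    e₁_inj := fun p q h => Subtype.ext <| bilinCentroid_ext hnd₁ hnd₂ p.2 q.2 <|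
      bilinCentroid_snd_snd_eq_of_fst_eq hfull p.2 q.2 <| LinearMap.toAddMonoidHom_injective h
    e₂_inj := fun p q h => Subtype.ext <| bilinCentroid_ext hnd₁ hnd₂ p.2 q.2 <|
      bilinCentroid_snd_snd_eq_of_snd_fst_eq hfull p.2 q.2 <| LinearMap.toAddMonoidHom_injective h
    e₀_inj := fun p q h => Subtype.ext <| bilinCentroid_ext hnd₁ hnd₂ p.2 q.2 <|
      LinearMap.toAddMonoidHom_injective h
    compat₁ := fun _ _ => rfl
    compat₂ := fun _ _ => rfl
    compat₀ := fun _ _ => rfl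
    bilin₁ := fun p => p.2.1
    bilin₂ := fun p => p.2.2 }

end BilinCentroid

namespace BilinEnrichment

variable {A : Type} [CommRing A] {M₁ M₂ N : Type} [AddCommGroup M₁] [AddCommGroup M₂]
  [AddCommGroup N] [Module A M₁] [Module A M₂] [Module A N] {f : M₁ →ₗ[A] M₂ →ₗ[A] N}
  (E : BilinEnrichment A M₁ M₂ N f)

def toBilinCentroid : E.P →+* bilinCentroid f :=
  RingHom.codRestrict
    ((E.ι.toModuleEnd E.e₁ E.compat₁).prod
      ((E.ι.toModuleEnd E.e₂ E.compat₂).prod (E.ι.toModuleEnd E.e₀ E.compat₀)))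
    _ fun p => ⟨E.bilin₁ p, E.bilin₂ p⟩

theorem toBilinCentroid_injective : Injective E.toBilinCentroid := fun _ _ h =>
  E.e₀_inj <| AddMonoidHom.ext fun z =>
    congrArg (fun t : bilinCentroid f => t.val.2.2 z) h

theorem toBilinCentroid_ι (a : A) : E.toBilinCentroid (E.ι a) = algebraMap A _ a :=
  Subtype.ext <| Prod.ext (LinearMap.ext (E.compat₁ a)) <|
    Prod.ext (LinearMap.ext (E.compat₂ a)) (LinearMap.ext (E.compat₀ a))

end BilinEnrichment

theorem exists_largest_enrichment_general (A : Type) [CommRing A]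
    (M₁ M₂ N : Type) [AddCommGroup M₁] [AddCommGroup M₂] [AddCommGroup N]
    [Module A M₁] [Module A M₂] [Module A N]
    [FaithfulSMul A M₁]
    (f : M₁ →ₗ[A] M₂ →ₗ[A] N)
    (hnd₁ : ∀ x : M₁, (∀ y : M₂, f x y = 0) → x = 0)
    (hnd₂ : ∀ y : M₂, (∀ x : M₁, f x y = 0) → y = 0)
    (hfull : Submodule.span A (Set.range fun p : M₁ × M₂ => f p.1 p.2) = ⊤) :
    ∃ E : BilinEnrichment A M₁ M₂ N f, ∀ E' : BilinEnrichment A M₁ M₂ N f,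
      ∃ j : E'.P →+* E.P, Function.Injective j ∧
        (∀ a : A, j (E'.ι a) = E.ι a) ∧
        (∀ (p : E'.P) (x : M₁), E.e₁ (j p) x = E'.e₁ p x) ∧
        (∀ (p : E'.P) (y : M₂), E.e₂ (j p) y = E'.e₂ p y) ∧
        (∀ (p : E'.P) (z : N), E.e₀ (j p) z = E'.e₀ p z) := by
  refine ⟨bilinCentroid.enrichment hnd₁ hnd₂ hfull, fun E' => ?_⟩
  exact ⟨E'.toBilinCentroid, E'.toBilinCentroid_injective, E'.toBilinCentroid_ι,
    fun _ _ => rfl, fun _ _ => rfl, fun _ _ => rfl⟩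

/-- a full non-degenerate bilinear map between faithful modules over a
commutative unital ring admits a largest enrichment: every enrichment embeds into it
compatibly. -/
theorem exists_largest_enrichment (A : Type) [CommRing A]
    (M₁ M₂ N : Type) [AddCommGroup M₁] [AddCommGroup M₂] [AddCommGroup N]
    [Module A M₁] [Module A M₂] [Module A N]
    [FaithfulSMul A M₁] [FaithfulSMul A M₂] [FaithfulSMul A N]
    (f : M₁ →ₗ[A] M₂ →ₗ[A] N)
    (hnd₁ : ∀ x : M₁, (∀ y : M₂, f x y = 0) → x = 0)
    (hnd₂ : ∀ y : M₂, (∀ x : M₁, f x y = 0) → y = 0)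
    (hfull : Submodule.span A (Set.range fun p : M₁ × M₂ => f p.1 p.2) = ⊤) :
    ∃ E : BilinEnrichment A M₁ M₂ N f, ∀ E' : BilinEnrichment A M₁ M₂ N f,
      ∃ j : E'.P →+* E.P, Function.Injective j ∧
        (∀ a : A, j (E'.ι a) = E.ι a) ∧
        (∀ (p : E'.P) (x : M₁), E.e₁ (j p) x = E'.e₁ p x) ∧
        (∀ (p : E'.P) (y : M₂), E.e₂ (j p) y = E'.e₂ p y) ∧
        (∀ (p : E'.P) (z : N), E.e₀ (j p) z = E'.e₀ p z) :=
  exists_largest_enrichment_general A M₁ M₂ N f hnd₁ hnd₂ hfull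
end

section
/- Let R be a ring with finitely generated additive group. Then R is regular (i.e., for some addition R₀, there exists a subring R_F ⊇ R² of R with R ≅ R_F × R₀) if and only if M(R) = N(R), where M(R) = Is(R² + Ann(R)) and N(R) = Is(R²) + Ann(R). -/
/-- An addition of `R`: a direct complement of `Δ(R) = Is(R²) ⊓ Ann(R)` in `Ann(R)`. -/
def IsAddition {R : Type*} [NonUnitalNonAssocRing R] (R₀ : AddSubgroup R) : Prop :=
  (isolator (sqIdeal R) ⊓ ann R) ⊓ R₀ = ⊥ ∧ (isolator (sqIdeal R) ⊓ ann R) ⊔ R₀ = ann R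

/- ## Auxiliary lemmas -/

lemma le_isolator {R : Type*} [AddCommGroup R] (I : AddSubgroup R) : I ≤ isolator I :=
  fun x hx => ⟨1, one_ne_zero, by simpa using hx⟩

lemma isolator_mono {R : Type*} [AddCommGroup R] {I J : AddSubgroup R} (h : I ≤ J) :
    isolator I ≤ isolator J := by
  rintro x ⟨n, hn, hx⟩
  exact ⟨n, hn, h hx⟩

lemma isolator_isolated {R : Type*} [AddCommGroup R] {I : AddSubgroup R} {n : ℤ} {x : R}
    (hn : n ≠ 0) (hx : n • x ∈ isolator I) : x ∈ isolator I := by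
  obtain ⟨m, hm, hmx⟩ := hx
  exact ⟨m * n, mul_ne_zero hm hn, by rwa [mul_smul]⟩

lemma mul_mem_sqIdeal {R : Type*} [NonUnitalNonAssocRing R] (x y : R) :
    x * y ∈ sqIdeal R :=
  AddSubgroup.subset_closure ⟨x, y, rfl⟩

lemma fg_subgroup {G : Type*} [AddCommGroup G] (hG : AddGroup.FG G) (K : AddSubgroup G) :
    AddGroup.FG ↥K := by
  haveI : Module.Finite ℤ G := Module.Finite.iff_addGroup_fg.mpr hG
  rw [← Module.Finite.iff_addGroup_fg]
  exact Module.Finite.iff_fg.mpr (IsNoetherian.noetherian (AddSubgroup.toIntSubmodule K))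

lemma exists_compl_of_isolated {G : Type*} [AddCommGroup G] (hG : AddGroup.FG G)
    (H : AddSubgroup G)
    (hiso : ∀ (n : ℤ) (x : G), n ≠ 0 → n • x ∈ H → x ∈ H) :
    ∃ C : AddSubgroup G, H ⊓ C = ⊥ ∧ H ⊔ C = ⊤ := by
  haveI : Module.Finite ℤ G := Module.Finite.iff_addGroup_fg.mpr hG
  set H' : Submodule ℤ G := AddSubgroup.toIntSubmodule H with hH'
  haveI : NoZeroSMulDivisors ℤ (G ⧸ H') := by
    constructor
    intro n q h
    by_cases hn : n = 0
    · exact Or.inl hn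
    · right
      obtain ⟨x, rfl⟩ := Submodule.Quotient.mk_surjective H' q
      rw [← Submodule.Quotient.mk_smul, Submodule.Quotient.mk_eq_zero] at h
      rw [Submodule.Quotient.mk_eq_zero]
      exact hiso n x hn h
  haveI : Module.Free ℤ (G ⧸ H') := Module.free_of_finite_type_torsion_free'
  obtain ⟨s, hs⟩ := Module.projective_lifting_property H'.mkQ (LinearMap.id)
    (Submodule.mkQ_surjective H')
  refine ⟨(LinearMap.range s).toAddSubgroup, ?_, ?_⟩
  · rw [eq_bot_iff]
    rintro x ⟨hx1, q, rfl⟩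
    have : H'.mkQ (s q) = q := congrFun (congrArg DFunLike.coe hs) q
    have hq : q = 0 := by
      rw [← this, Submodule.mkQ_apply, Submodule.Quotient.mk_eq_zero]
      exact hx1
    simp [hq]
  · rw [eq_top_iff]
    intro x _
    have h1 : x - s (H'.mkQ x) ∈ H := by
      have : H'.mkQ (x - s (H'.mkQ x)) = 0 := by
        have : H'.mkQ (s (H'.mkQ x)) = H'.mkQ x := congrFun (congrArg DFunLike.coe hs) _
        rw [map_sub, this, sub_self]
      rwa [Submodule.mkQ_apply, Submodule.Quotient.mk_eq_zero] at this
    have : x = (x - s (H'.mkQ x)) + s (H'.mkQ x) := (sub_add_cancel x _).symm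
    rw [this]
    exact AddSubgroup.add_mem _ (AddSubgroup.mem_sup_left h1)
      (AddSubgroup.mem_sup_right ⟨_, rfl⟩)

lemma exists_compl_le {G : Type*} [AddCommGroup G] (hG : AddGroup.FG G)
    (H K : AddSubgroup G) (hHK : H ≤ K)
    (hiso : ∀ (n : ℤ) (x : G), n ≠ 0 → x ∈ K → n • x ∈ H → x ∈ H) :
    ∃ C : AddSubgroup G, C ≤ K ∧ H ⊓ C = ⊥ ∧ H ⊔ C = K := by
  obtain ⟨C', hC1, hC2⟩ := exists_compl_of_isolated (fg_subgroup hG K)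
    (H.addSubgroupOf K) (by
      intro n x hn hx
      rw [AddSubgroup.mem_addSubgroupOf] at hx ⊢
      exact hiso n x hn x.2 (by simpa using hx))
  refine ⟨C'.map K.subtype, fun x hx => ?_, ?_, ?_⟩
  · obtain ⟨c, _, rfl⟩ := hx
    exact c.2
  · rw [eq_bot_iff]
    rintro x ⟨hx1, c, hc, rfl⟩
    have : c ∈ H.addSubgroupOf K ⊓ C' := ⟨AddSubgroup.mem_addSubgroupOf.mpr hx1, hc⟩
    rw [hC1, AddSubgroup.mem_bot] at this
    simp [this]
  · apply le_antisymm
    · exact sup_le hHK (fun x hx => by obtain ⟨c, _, rfl⟩ := hx; exact c.2)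
    · intro x hx
      have : (⟨x, hx⟩ : ↥K) ∈ H.addSubgroupOf K ⊔ C' := by rw [hC2]; trivial
      obtain ⟨a, ha, b, hb, hab⟩ := AddSubgroup.mem_sup.mp this
      have : x = (a : G) + (b : G) := by
        have := congrArg (Subtype.val) hab; simpa using this.symm
      rw [this]
      exact AddSubgroup.add_mem _
        (AddSubgroup.mem_sup_left (by rwa [AddSubgroup.mem_addSubgroupOf] at ha))
        (AddSubgroup.mem_sup_right ⟨b, hb, rfl⟩)

/-- `R` is regular (for some addition `R₀` there is a subring `R_F ⊇ R²` with
`R ≅ R_F × R₀`, internally: `R_F` and `R₀` are complementary) iff `M(R) = N(R)`. -/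
theorem regular_iff_M_eq_N (R : Type*) [NonUnitalNonAssocRing R] (hR : AddGroup.FG R) :
    (∃ R₀ : AddSubgroup R, IsAddition R₀ ∧
      ∃ RF : NonUnitalSubring R, sqIdeal R ≤ RF.toAddSubgroup ∧
        RF.toAddSubgroup ⊓ R₀ = ⊥ ∧ RF.toAddSubgroup ⊔ R₀ = ⊤) ↔
    isolator (sqIdeal R ⊔ ann R) = isolator (sqIdeal R) ⊔ ann R := by
  constructor
  · rintro ⟨R₀, ⟨hd1, hd2⟩, RF, hRF2, hinf, hsup⟩
    have hR0A : R₀ ≤ ann R := le_sup_right.trans hd2.le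
    -- Step 1: `isolator (sqIdeal R) ≤ RF`
    have hIRF : isolator (sqIdeal R) ≤ RF.toAddSubgroup := by
      rintro u ⟨m, hm, hmu⟩
      have hu : u ∈ RF.toAddSubgroup ⊔ R₀ := by rw [hsup]; trivial
      obtain ⟨f, hf, w, hw, hfw⟩ := AddSubgroup.mem_sup.mp hu
      have hmw0 : m • w = 0 := by
        have h1 : m • w ∈ RF.toAddSubgroup := by
          have : m • w = m • u - m • f := by rw [← hfw, smul_add]; abel
          rw [this]
          exact AddSubgroup.sub_mem _ (hRF2 hmu) (AddSubgroup.zsmul_mem _ hf m)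
        have h2 : m • w ∈ R₀ := AddSubgroup.zsmul_mem _ hw m
        have : m • w ∈ RF.toAddSubgroup ⊓ R₀ := ⟨h1, h2⟩
        rwa [hinf, AddSubgroup.mem_bot] at this
      have hwI : w ∈ isolator (sqIdeal R) := ⟨m, hm, by rw [hmw0]; exact (sqIdeal R).zero_mem⟩
      have hw0 : w = 0 := by
        have : w ∈ (isolator (sqIdeal R) ⊓ ann R) ⊓ R₀ := ⟨⟨hwI, hR0A hw⟩, hw⟩
        rwa [hd1, AddSubgroup.mem_bot] at this
      rw [← hfw, hw0, add_zero]
      exact hf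
    apply le_antisymm
    · rintro x ⟨n, hn, hnx⟩
      have h1 : n • x ∈ isolator (sqIdeal R) ⊔ R₀ := by
        refine (sup_le (le_trans (le_isolator _) le_sup_left) ?_ : sqIdeal R ⊔ ann R ≤ _) hnx
        rw [← hd2]
        exact sup_le (le_trans inf_le_left le_sup_left) le_sup_right
      obtain ⟨u, hu, w, hw, huw⟩ := AddSubgroup.mem_sup.mp h1
      have hx : x ∈ RF.toAddSubgroup ⊔ R₀ := by rw [hsup]; trivial
      obtain ⟨f, hf, z, hz, hfz⟩ := AddSubgroup.mem_sup.mp hx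
      have hkey : u - n • f = 0 := by
        have e : u + w = n • f + n • z := by rw [huw, ← hfz, smul_add]
        have k1 : u - n • f ∈ RF.toAddSubgroup :=
          AddSubgroup.sub_mem _ (hIRF hu) (AddSubgroup.zsmul_mem _ hf n)
        have k2 : u - n • f ∈ R₀ := by
          have : u - n • f = n • z - w := by
            rw [sub_eq_sub_iff_add_eq_add]
            rw [e]; abel
          rw [this]
          exact AddSubgroup.sub_mem _ (AddSubgroup.zsmul_mem _ hz n) hw
        have : u - n • f ∈ RF.toAddSubgroup ⊓ R₀ := ⟨k1, k2⟩
        rwa [hinf, AddSubgroup.mem_bot] at this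
      have hnf : n • f = u := by rwa [sub_eq_zero, eq_comm] at hkey
      have hfI : f ∈ isolator (sqIdeal R) := by
        obtain ⟨m, hm, hmu⟩ := hu
        exact ⟨m * n, mul_ne_zero hm hn, by rw [mul_smul, hnf]; exact hmu⟩
      rw [← hfz]
      exact AddSubgroup.add_mem _ (AddSubgroup.mem_sup_left hfI)
        (AddSubgroup.mem_sup_right (hR0A hz))
    · exact sup_le (isolator_mono le_sup_left) (le_trans le_sup_right (le_isolator _))
  · intro h
    obtain ⟨R₀, hR0A, hd1, hd2⟩ := exists_compl_le hR (isolator (sqIdeal R) ⊓ ann R) (ann R)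
      inf_le_right (fun n x hn hxA hnx => ⟨isolator_isolated hn hnx.1, hxA⟩)
    have hS : isolator (sqIdeal R) ⊔ R₀ = isolator (sqIdeal R ⊔ ann R) := by
      rw [h, ← hd2, ← sup_assoc, sup_eq_left.mpr (inf_le_left :
        isolator (sqIdeal R) ⊓ ann R ≤ isolator (sqIdeal R))]
    obtain ⟨C, hc1, hc2⟩ := exists_compl_of_isolated hR (isolator (sqIdeal R) ⊔ R₀)
      (fun n x hn hnx => by
        rw [hS] at hnx ⊢
        exact isolator_isolated hn hnx)
    refine ⟨R₀, ⟨hd1, hd2⟩,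
      { carrier := (isolator (sqIdeal R) ⊔ C : AddSubgroup R)
        add_mem' := fun ha hb => AddSubgroup.add_mem _ ha hb
        zero_mem' := AddSubgroup.zero_mem _
        neg_mem' := fun ha => AddSubgroup.neg_mem _ ha
        mul_mem' := fun {a b} _ _ =>
          AddSubgroup.mem_sup_left (le_isolator _ (mul_mem_sqIdeal a b)) }, ?_, ?_, ?_⟩
    · exact le_trans (le_isolator _) (le_sup_left :
        isolator (sqIdeal R) ≤ isolator (sqIdeal R) ⊔ C)
    · rw [eq_bot_iff]
      rintro x ⟨hx1, hx2⟩
      obtain ⟨u, hu, c, hc, huc⟩ := AddSubgroup.mem_sup.mp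
        (hx1 : x ∈ isolator (sqIdeal R) ⊔ C)
      have hc0 : c = 0 := by
        have hcS : c ∈ isolator (sqIdeal R) ⊔ R₀ := by
          have : c = x - u := by rw [← huc]; abel
          rw [this]
          exact AddSubgroup.sub_mem _ (AddSubgroup.mem_sup_right hx2)
            (AddSubgroup.mem_sup_left hu)
        have : c ∈ (isolator (sqIdeal R) ⊔ R₀) ⊓ C := ⟨hcS, hc⟩
        rwa [hc1, AddSubgroup.mem_bot] at this
      have hxu : x = u := by rw [← huc, hc0, add_zero]
      have : x ∈ (isolator (sqIdeal R) ⊓ ann R) ⊓ R₀ :=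
        ⟨⟨hxu ▸ hu, hR0A hx2⟩, hx2⟩
      rwa [hd1, AddSubgroup.mem_bot] at this
    · show (isolator (sqIdeal R) ⊔ C) ⊔ R₀ = ⊤
      rw [sup_right_comm, hc2]
end

section
/- Let R be a ring with finitely generated additive group, and suppose for some addition R₀ there is a subring R_F of R containing R² with R ≅ R_F × R₀. Then M(R) = N(R). -/
/-- if for some addition `R₀` there is a subring `R_F ⊇ R²` with
`R ≅ R_F × R₀` (internal direct decomposition), then `M(R) = N(R)`. -/
theorem splitting_implies_M_eq_N (R : Type*) [NonUnitalNonAssocRing R] (hR : AddGroup.FG R)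
    (R₀ : AddSubgroup R) (hR₀ : IsAddition R₀)
    (RF : NonUnitalSubring R) (hsq : sqIdeal R ≤ RF.toAddSubgroup)
    (hdisj : RF.toAddSubgroup ⊓ R₀ = ⊥) (hcodisj : RF.toAddSubgroup ⊔ R₀ = ⊤) :
    isolator (sqIdeal R ⊔ ann R) = isolator (sqIdeal R) ⊔ ann R := by
  obtain ⟨hdΔ, hsupΔ⟩ := hR₀
  have hR₀ann : R₀ ≤ ann R := hsupΔ ▸ le_sup_right
  apply le_antisymm
  · rintro x ⟨n, hn, hnx⟩
    rw [AddSubgroup.mem_sup] at hnx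
    obtain ⟨s, hs, a, ha, hsa⟩ := hnx
    have hx : x ∈ RF.toAddSubgroup ⊔ R₀ := hcodisj ▸ AddSubgroup.mem_top x
    rw [AddSubgroup.mem_sup] at hx
    obtain ⟨f, hf, r, hr, hfr⟩ := hx
    have h1 : n • f + n • r = s + a := by rw [← smul_add, hfr, hsa]
    have h2 : n • f - s = a - n • r := by
      rw [sub_eq_sub_iff_add_eq_add, h1, add_comm]
    -- a' := n • f - s lies in ann ⊓ RF
    have ha'ann : n • f - s ∈ ann R := by
      rw [h2]
      exact AddSubgroup.sub_mem _ ha (AddSubgroup.zsmul_mem _ (hR₀ann hr) n)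
    have ha'RF : n • f - s ∈ RF.toAddSubgroup :=
      AddSubgroup.sub_mem _ (AddSubgroup.zsmul_mem _ hf n) (hsq hs)
    -- ann ⊓ RF ≤ isolator (sqIdeal R)
    have ha'iso : n • f - s ∈ isolator (sqIdeal R) := by
      have hmem : n • f - s ∈ (isolator (sqIdeal R) ⊓ ann R) ⊔ R₀ := by
        rw [hsupΔ]; exact ha'ann
      rw [AddSubgroup.mem_sup] at hmem
      obtain ⟨d, hd, r', hr', hdr⟩ := hmem
      obtain ⟨m, hm, hmd⟩ := hd.1
      have hmr' : m • r' = m • (n • f - s) - m • d := by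
        rw [← hdr, smul_add]; abel
      have hmr'RF : m • r' ∈ RF.toAddSubgroup := by
        rw [hmr']
        exact AddSubgroup.sub_mem _ (AddSubgroup.zsmul_mem _ ha'RF m) (hsq hmd)
      have hmr'0 : m • r' = 0 := by
        have : m • r' ∈ RF.toAddSubgroup ⊓ R₀ :=
          ⟨hmr'RF, AddSubgroup.zsmul_mem _ hr' m⟩
        rwa [hdisj, AddSubgroup.mem_bot] at this
      refine ⟨m, hm, ?_⟩
      have : m • (n • f - s) = m • d := by
        have h := hmr'
        rw [hmr'0] at h
        exact sub_eq_zero.mp h.symm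
      rw [this]; exact hmd
    -- hence f ∈ isolator (sqIdeal R)
    obtain ⟨m, hm, hmf⟩ : n • f ∈ isolator (sqIdeal R) := by
      have : n • f = s + (n • f - s) := by abel
      rw [this]
      exact AddSubgroup.add_mem _ ⟨1, one_ne_zero, by simpa using hs⟩ ha'iso
    have hfiso : f ∈ isolator (sqIdeal R) :=
      ⟨m * n, mul_ne_zero hm hn, by rwa [mul_smul]⟩
    rw [← hfr]
    exact AddSubgroup.add_mem _ (AddSubgroup.mem_sup_left hfiso)
      (AddSubgroup.mem_sup_right (hR₀ann hr))
  · refine sup_le ?_ ?_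
    · rintro x ⟨n, hn, hnx⟩
      exact ⟨n, hn, AddSubgroup.mem_sup_left hnx⟩
    · intro x hx
      exact ⟨1, one_ne_zero, by simpa using AddSubgroup.mem_sup_right hx⟩
end

section
/- Let R be a ring with finitely generated additive group and R* an ultrapower of R over an ultrafilter D. Then Is((R*)²) = (Is(R²))*, where Is(I) denotes the set of elements x with nx ∈ I for some nonzero integer n. -/
open Filter

/-! If `s₁, …, sᵣ` generate `R` additively, then `x * y = ∑ⱼ sⱼ * (cⱼ • y)` whenever
`x = ∑ⱼ cⱼ • sⱼ`, so every element of `R²` has the form `∑ⱼ sⱼ * aⱼ`. An element of `R*` lying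
in `R²` on a `D`-large set is therefore a sum of `r` products in `R*`, whence `(R²)* = (R*)²`.
Moreover `Is(R²) / R²` is the torsion of the finitely generated group `R / R²`, so one `m ≠ 0`
maps `Is(R²)` into `R²`; with this uniform exponent `Is` commutes with the ultrapower. -/

namespace AddSubgroup

variable {α G : Type*} [AddGroup G]

/-- The ultrapower `J*` of `J`, as a subgroup of `G*`. -/
def germ (J : AddSubgroup G) (l : Filter α) : AddSubgroup (Germ l G) where
  carrier := {g | g.LiftPred (· ∈ J)}
  zero_mem' := Germ.liftPred_const J.zero_mem
  add_mem' {a b} := Germ.inductionOn₂ a b fun _ _ ha hb =>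
    Germ.liftPred_coe.mpr <| (Germ.liftPred_coe.mp ha).and (Germ.liftPred_coe.mp hb) |>.mono
      fun _ h => J.add_mem h.1 h.2
  neg_mem' {a} := Germ.inductionOn a fun _ ha =>
    Germ.liftPred_coe.mpr <| (Germ.liftPred_coe.mp ha).mono fun _ h => J.neg_mem h

theorem coe_mem_germ {J : AddSubgroup G} {l : Filter α} {f : α → G} :
    (f : Germ l G) ∈ J.germ l ↔ ∀ᶠ i in l, f i ∈ J :=
  Germ.liftPred_coe

end AddSubgroup

section Isolator

variable {G : Type*} [AddCommGroup G]

theorem exists_zsmul_mem_of_mem_isolator (hG : AddGroup.FG G) (I : AddSubgroup G) :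
    ∃ m : ℤ, m ≠ 0 ∧ ∀ x ∈ isolator I, m • x ∈ I := by
  have : Module.Finite ℤ G := Module.Finite.iff_addGroup_fg.mpr hG
  obtain ⟨m, hm_ann, hm⟩ := Submodule.annihilator_top_inter_nonZeroDivisors
    (Submodule.torsion_isTorsion (R := ℤ) (M := G ⧸ I.toIntSubmodule))
  refine ⟨m, nonZeroDivisors.coe_ne_zero ⟨m, hm⟩, fun x ⟨n, hn, hnx⟩ => ?_⟩
  have hx : (Submodule.Quotient.mk x : G ⧸ I.toIntSubmodule) ∈ Submodule.torsion ℤ _ :=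
    ⟨⟨n, mem_nonZeroDivisors_of_ne_zero hn⟩,
      (Submodule.Quotient.mk_eq_zero _).mpr hnx⟩
  have h0 : (Submodule.Quotient.mk (m • x) : G ⧸ I.toIntSubmodule) = 0 := by
    simpa using congrArg Subtype.val (Submodule.mem_annihilator.mp hm_ann ⟨_, hx⟩ Submodule.mem_top)
  exact (Submodule.Quotient.mk_eq_zero _).mp h0

variable {α : Type*}

theorem isolator_germ (hG : AddGroup.FG G) (J : AddSubgroup G) (l : Filter α) :
    isolator (J.germ l) = (isolator J).germ l := by
  obtain ⟨m, hm, hmJ⟩ := exists_zsmul_mem_of_mem_isolator hG J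
  ext g
  induction g using Germ.inductionOn with | h f => ?_
  rw [AddSubgroup.coe_mem_germ]
  constructor
  · rintro ⟨n, hn, hnf⟩
    rw [← Germ.coe_smul, AddSubgroup.coe_mem_germ] at hnf
    exact hnf.mono fun i hi => ⟨n, hn, hi⟩
  · intro hf
    refine ⟨m, hm, ?_⟩
    rw [← Germ.coe_smul, AddSubgroup.coe_mem_germ]
    exact hf.mono fun i hi => hmJ _ hi

end Isolator

section SqIdeal

variable {R : Type*} [NonUnitalNonAssocRing R]

theorem exists_sum_mul_eq_of_mem_sqIdeal {S : Finset R}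
    (hS : AddSubgroup.closure (S : Set R) = ⊤) {x : R} (hx : x ∈ sqIdeal R) :
    ∃ a : R → R, ∑ s ∈ S, s * a s = x := by
  let φ : (R → R) →+ R :=
    ∑ s ∈ S, (AddMonoidHom.mulLeft s).comp (Pi.evalAddMonoidHom (fun _ => R) s)
  suffices sqIdeal R ≤ φ.range by simpa [φ] using this hx
  refine (AddSubgroup.closure_le _).mpr ?_
  rintro _ ⟨x, y, rfl⟩
  have hx_span : x ∈ Submodule.span ℤ (S : Set R) := by
    rw [← Submodule.mem_toAddSubgroup, Submodule.span_int_eq_addSubgroupClosure, hS]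
    exact AddSubgroup.mem_top x
  obtain ⟨c, -, rfl⟩ := Submodule.mem_span_finset.mp hx_span
  exact ⟨fun s => c s • y, by simp [φ, Finset.sum_mul, smul_mul_assoc, mul_smul_comm]⟩

variable {α : Type*} {l : Filter α}

theorem coe_mem_sqIdeal_germ {S : Finset R} (hS : AddSubgroup.closure (S : Set R) = ⊤)
    {f : α → R} (hf : ∀ᶠ i in l, f i ∈ sqIdeal R) : (f : Germ l R) ∈ sqIdeal (Germ l R) := by
  choose! a ha using fun i (h : f i ∈ sqIdeal R) => exists_sum_mul_eq_of_mem_sqIdeal hS h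
  have hsum : ∑ s ∈ S, (↑(fun _ : α => s) : Germ l R) * ↑(fun i => a i s) = f := by
    simp_rw [← Germ.coe_mul]
    refine (map_sum (Germ.coeAddHom (M := R) l) _ S).symm.trans (Germ.coe_eq.mpr ?_)
    exact hf.mono fun i hi => by simpa using ha i hi
  rw [← hsum]
  exact AddSubgroup.sum_mem _ fun s _ => AddSubgroup.subset_closure ⟨_, _, rfl⟩

theorem sqIdeal_germ_le : sqIdeal (Germ l R) ≤ (sqIdeal R).germ l := by
  refine (AddSubgroup.closure_le _).mpr ?_
  rintro _ ⟨a, b, rfl⟩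
  induction a, b using Germ.inductionOn₂ with | h f g => ?_
  rw [SetLike.mem_coe, ← Germ.coe_mul, AddSubgroup.coe_mem_germ]
  exact .of_forall fun i => AddSubgroup.subset_closure ⟨f i, g i, rfl⟩

theorem sqIdeal_germ (hR : AddGroup.FG R) : sqIdeal (Germ l R) = (sqIdeal R).germ l := by
  obtain ⟨S, hS⟩ := hR.out
  exact le_antisymm sqIdeal_germ_le fun g =>
    Germ.inductionOn g fun _ hf => coe_mem_sqIdeal_germ hS (AddSubgroup.coe_mem_germ.mp hf)

end SqIdeal

/-- for a ring with finitely generated additive group and any ultrapower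
`R*`, `Is((R*)²) = (Is(R²))*`. -/
theorem isolator_sq_ultrapower (R : Type*) [NonUnitalNonAssocRing R]
    (hR : AddGroup.FG R) {ι : Type*} (U : Ultrafilter ι) :
    (isolator (sqIdeal (Germ (U : Filter ι) R)) : Set (Germ (U : Filter ι) R)) =
      {g : Germ (U : Filter ι) R | g.LiftPred (· ∈ isolator (sqIdeal R))} := by
  rw [sqIdeal_germ hR, isolator_germ hR]
  rfl
end

section
/- Let A be a free abelian group of finite rank n with basis v₁,…,vₙ, let A* be its ultrapower over an ℵ₁-incomplete ultrafilter D, let (b_{ij}) be an n×n integer matrix with determinant ±1, and let α₁,…,αₙ be elements of the ultrapower Z* of Z such that no prime p divides any α_i in Z*. Then there is a group automorphism ψ of A* with ψ(v_i) = Σ_k α_k b_{ik} v_k. -/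
/-!
Via the basis, `A*` is a free `ℤ*`-module with basis the constants `vᵢ`, so it suffices to find,
for each `α` divisible by no prime, an additive automorphism `θ` of `ℤ*` with `θ 1 = α`, and to
compose the resulting diagonal automorphism with the one induced by `B` on `A`.

Let `K ⊆ ℤ*` be the ideal of elements divisible by every positive integer. It is a divisible
group meeting `ℤ` trivially, so there is an additive retraction `r : ℤ* → K` with `r 1 = 0`.
Multiplication by `α` is bijective on `ℤ*/K`: injective because `α` is coprime to each fixed
`d` on a `U`-large set, surjective by ℵ₁-incompleteness, which provides `N → ∞` along `U` with
`αᵢ` coprime to `Nᵢ!`, so that `β ≡ α γ` can be solved modulo every `Nᵢ!` at once. Then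
`θ x = α x + (1 - α) r x` is the identity on `K` and induces multiplication by `α` on `ℤ*/K`,
hence is bijective, and `θ 1 = α`.
-/

open Filter

theorem Module.Baer.of_forall_exists_nsmul_eq {A : Type*} [AddCommGroup A]
    (h : ∀ n : ℕ, n ≠ 0 → ∀ a : A, ∃ b, n • b = a) : Module.Baer ℤ A := by
  let _ := AddCommGroup.divisibleByIntOfSMulTopEqTop A fun {n} hn =>
    AddSubgroup.map_top_of_surjective _ fun a => by
      obtain ⟨b, hb⟩ := h n.natAbs (Int.natAbs_ne_zero.mpr hn) a
      rcases Int.natAbs_eq n with hn' | hn'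
      · exact ⟨b, by rw [hn']; exact (natCast_zsmul _ _).trans hb⟩
      · exact ⟨-b, by rw [hn']; exact (neg_smul_neg _ _).trans ((natCast_zsmul _ _).trans hb)⟩
  exact Module.Baer.of_divisible A

theorem Submodule.exists_retraction_of_disjoint {R M : Type*} [Ring R] [AddCommGroup M]
    [Module R M] {K H : Submodule R M} (hK : Module.Baer R K) (hKH : Disjoint K H) :
    ∃ r : M →ₗ[R] M, (∀ x, r x ∈ K) ∧ (∀ k ∈ K, r k = k) ∧ ∀ h ∈ H, r h = 0 := by
  have hinj : Function.Injective (K.subtype.coprod H.subtype) := by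
    rw [← LinearMap.ker_eq_bot, LinearMap.ker_coprod_of_disjoint_range _ _ (by simpa using hKH)]
    simp
  obtain ⟨r, hr⟩ := hK.extension_property _ hinj (LinearMap.fst R K H)
  refine ⟨K.subtype ∘ₗ r, fun x => (r x).2, fun k hk => ?_, fun h hh => ?_⟩
  · simpa using congrArg Subtype.val (LinearMap.congr_fun hr (⟨k, hk⟩, 0))
  · simpa using congrArg Subtype.val (LinearMap.congr_fun hr (0, ⟨h, hh⟩))

theorem Ideal.exists_addEquiv_of_mul_bijective_mod {R : Type*} [CommRing R] (K : Ideal R)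
    (r : R →+ R) (hr : ∀ x, r x ∈ K) (hrK : ∀ k ∈ K, r k = k) {a : R}
    (hinj : ∀ x, a * x ∈ K → x ∈ K) (hsurj : ∀ y, ∃ x, y - a * x ∈ K) :
    ∃ θ : R ≃+ R, ∀ x, θ x = a * x + (1 - a) * r x := by
  let θ : R →+ R := AddMonoidHom.mulLeft a + (AddMonoidHom.mulLeft (1 - a)).comp r
  have hθ : ∀ x, θ x = a * x + (1 - a) * r x := fun _ => rfl
  have hθK : ∀ k ∈ K, θ k = k := fun k hk => by rw [hθ, hrK k hk]; ring
  have hθ_sub : ∀ x, θ x - a * x ∈ K := fun x => by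
    simpa [hθ] using K.mul_mem_left (1 - a) (hr x)
  refine ⟨AddEquiv.ofBijective θ ⟨(injective_iff_map_eq_zero θ).2 fun x hx => ?_, fun y => ?_⟩,
    hθ⟩
  · have hxK : x ∈ K := hinj x (by simpa [hx] using K.neg_mem (hθ_sub x))
    rwa [← hθK x hxK]
  · obtain ⟨x, hx⟩ := hsurj y
    have hk : y - θ x ∈ K := by simpa using K.sub_mem hx (hθ_sub x)
    exact ⟨x + (y - θ x), by rw [map_add, hθK _ hk, add_sub_cancel]⟩

section InfinitelyDivisible

variable (R : Type*) [CommRing R]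

def Ideal.infinitelyDivisible : Ideal R :=
  ⨅ (n : ℕ) (_ : n ≠ 0), Ideal.span {(n : R)}

variable {R}

theorem Ideal.mem_infinitelyDivisible {x : R} :
    x ∈ Ideal.infinitelyDivisible R ↔ ∀ n : ℕ, n ≠ 0 → (n : R) ∣ x := by
  simp [Ideal.infinitelyDivisible, Ideal.mem_span_singleton]

variable [IsDomain R] [CharZero R]

theorem Ideal.exists_nsmul_eq_of_mem_infinitelyDivisible {n : ℕ} (hn : n ≠ 0) {x : R}
    (hx : x ∈ Ideal.infinitelyDivisible R) : ∃ y ∈ Ideal.infinitelyDivisible R, n • y = x := by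
  rw [Ideal.mem_infinitelyDivisible] at hx
  obtain ⟨y, rfl⟩ := hx n hn
  refine ⟨y, Ideal.mem_infinitelyDivisible.2 fun m hm => ?_, nsmul_eq_mul _ _⟩
  obtain ⟨z, hz⟩ := hx (n * m) (mul_ne_zero hn hm)
  exact ⟨z, mul_left_cancel₀ (Nat.cast_ne_zero.mpr hn) (by rw [hz]; push_cast; ring)⟩

variable (R) in
theorem Ideal.baer_infinitelyDivisible :
    Module.Baer ℤ ((Ideal.infinitelyDivisible R).restrictScalars ℤ) :=
  Module.Baer.of_forall_exists_nsmul_eq fun _ hn ⟨_, hx⟩ => by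
    obtain ⟨y, hy, hyx⟩ := Ideal.exists_nsmul_eq_of_mem_infinitelyDivisible hn hx
    exact ⟨⟨y, hy⟩, Subtype.ext hyx⟩

end InfinitelyDivisible

section Ultrapower

variable {ι : Type*} {l : Filter ι}

theorem Filter.exists_tendsto_atTop_forall_lt
    (hl : ∃ f : ℕ → Set ι, (∀ m, f m ∈ l) ∧ ⋂ m, f m = ∅) {P : ℕ → ι → Prop}
    (hP : ∀ m, ∀ᶠ i in l, P m i) :
    ∃ N : ι → ℕ, Tendsto N l atTop ∧ ∀ i, ∀ m < N i, P m i := by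
  classical
  obtain ⟨f, hf, hf_empty⟩ := hl
  have hex : ∀ i, ∃ m, ¬ (i ∈ f m ∧ P m i) := fun i => by
    by_contra! h
    simpa [hf_empty] using Set.mem_iInter.2 fun m => (h m).1
  refine ⟨fun i => Nat.find (hex i), tendsto_atTop.2 fun m => ?_,
    fun i m hm => (not_not.1 (Nat.find_min (hex i) hm)).2⟩
  filter_upwards [(eventually_all_finite (Set.finite_Iio m)).2 fun k _ => inter_mem (hf k) (hP k)]
    with i hi
  exact (Nat.le_find_iff _ _).2 fun k hk => not_not.2 (hi k hk)

theorem Filter.Germ.coe_dvd_coe_iff {R : Type*} [Monoid R] {f g : ι → R} :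
    (f : Germ l R) ∣ g ↔ ∀ᶠ i in l, f i ∣ g i := by
  constructor
  · rintro ⟨⟨c⟩, hc⟩
    exact (Germ.coe_eq.1 hc).mono fun i hi => ⟨c i, hi⟩
  · intro h
    have : ∀ i, ∃ c, f i ∣ g i → g i = f i * c := fun i => by
      by_cases hi : f i ∣ g i
      · exact hi.imp fun c hc _ => hc
      · exact ⟨1, fun h => absurd h hi⟩
    choose c hc using this
    exact ⟨c, Germ.coe_eq.2 (h.mono hc)⟩

theorem Filter.Germ.eventually_isCoprime_of_forall_prime_not_dvd {U : Ultrafilter ι}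
    {a : ι → ℤ} (ha : ∀ p : ℕ, p.Prime → ¬ (p : Germ (U : Filter ι) ℤ) ∣ ↑a) {d : ℤ}
    (hd : d ≠ 0) : ∀ᶠ i in U, IsCoprime (a i) d := by
  have hprime : ∀ p ∈ d.natAbs.primeFactors, ∀ᶠ i in U, ¬ (p : ℤ) ∣ a i := fun p hp =>
    Ultrafilter.eventually_not.2 fun h =>
      ha p (Nat.prime_of_mem_primeFactors hp) (Germ.coe_dvd_coe_iff.2 h)
  filter_upwards [(eventually_all_finset _).2 hprime] with i hi
  refine isCoprime_of_prime_dvd (fun h => hd h.2) fun z hz hza hzd => hi z.natAbs ?_ ?_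
  · exact Nat.mem_primeFactors.2 ⟨Int.prime_iff_natAbs_prime.1 hz,
      Int.natAbs_dvd_natAbs.2 hzd, Int.natAbs_ne_zero.2 hd⟩
  · exact Int.natAbs_dvd.2 hza

theorem Filter.Germ.disjoint_infinitelyDivisible_span_one [l.NeBot] :
    Disjoint ((Ideal.infinitelyDivisible (Germ l ℤ)).restrictScalars ℤ) (ℤ ∙ 1) := by
  refine Submodule.disjoint_def.2 fun x hxK hx1 => ?_
  obtain ⟨n, rfl⟩ := Submodule.mem_span_singleton.1 hx1
  have hdvd := (Ideal.mem_infinitelyDivisible.1 hxK) (n.natAbs + 1) (by omega)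
  rw [zsmul_one, ← Germ.natCast_def, ← Germ.intCast_def, Germ.coe_dvd_coe_iff] at hdvd
  obtain ⟨_, hdvd⟩ := hdvd.exists
  rw [Int.cast_id] at hdvd
  rw [Int.eq_zero_of_dvd_of_natAbs_lt_natAbs hdvd (by omega), zero_smul]

theorem Filter.Germ.mem_infinitelyDivisible_of_mul_mem {a : ι → ℤ}
    (ha : ∀ d : ℤ, d ≠ 0 → ∀ᶠ i in l, IsCoprime (a i) d) {x : Germ l ℤ}
    (hx : ↑a * x ∈ Ideal.infinitelyDivisible (Germ l ℤ)) :
    x ∈ Ideal.infinitelyDivisible (Germ l ℤ) := by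
  induction x using Germ.inductionOn with | h g => ?_
  rw [Ideal.mem_infinitelyDivisible] at hx ⊢
  intro n hn
  have hx := hx n hn
  rw [← Germ.natCast_def, ← Germ.coe_mul, Germ.coe_dvd_coe_iff] at hx
  rw [← Germ.natCast_def, Germ.coe_dvd_coe_iff]
  filter_upwards [hx, ha n (by exact_mod_cast hn)] with i hdvd hcop
  exact hcop.symm.dvd_of_dvd_mul_left hdvd

theorem Filter.Germ.exists_sub_mul_mem_infinitelyDivisible
    (hl : ∃ f : ℕ → Set ι, (∀ m, f m ∈ l) ∧ ⋂ m, f m = ∅) {a : ι → ℤ}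
    (ha : ∀ d : ℤ, d ≠ 0 → ∀ᶠ i in l, IsCoprime (a i) d) (y : Germ l ℤ) :
    ∃ x, y - ↑a * x ∈ Ideal.infinitelyDivisible (Germ l ℤ) := by
  induction y using Germ.inductionOn with | h b => ?_
  obtain ⟨N, hN, hcop⟩ := exists_tendsto_atTop_forall_lt hl
    (P := fun m i => IsCoprime (a i) (m + 1)) fun m => ha (m + 1) (by omega)
  have hfact : ∀ i, IsCoprime (a i) ((N i).factorial : ℤ) := fun i => by
    rw [← Finset.prod_range_add_one_eq_factorial]
    push_cast
    exact IsCoprime.prod_right fun m hm => hcop i m (Finset.mem_range.1 hm)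
  choose u w huw using hfact
  refine ⟨↑(b * u), Ideal.mem_infinitelyDivisible.2 fun n hn => ?_⟩
  rw [← Germ.coe_mul, ← Germ.coe_sub, ← Germ.natCast_def, Germ.coe_dvd_coe_iff]
  filter_upwards [hN.eventually_ge_atTop n] with i hi
  have hbw : b i - a i * (b i * u i) = b i * w i * (N i).factorial := by
    linear_combination (-b i) * huw i
  simp only [Pi.sub_apply, Pi.mul_apply, hbw]
  exact (Int.natCast_dvd_natCast.2 (Nat.dvd_factorial (Nat.pos_of_ne_zero hn) hi)).mul_left _

theorem Filter.Germ.exists_addEquiv_int_apply_one {U : Ultrafilter ι}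
    (hU : ∃ f : ℕ → Set ι, (∀ m, f m ∈ U) ∧ ⋂ m, f m = ∅) {α : Germ (U : Filter ι) ℤ}
    (hα : ∀ p : ℕ, p.Prime → ¬ (p : Germ (U : Filter ι) ℤ) ∣ α) :
    ∃ θ : Germ (U : Filter ι) ℤ ≃+ Germ (U : Filter ι) ℤ, θ 1 = α := by
  induction α using Germ.inductionOn with | h a => ?_
  have ha : ∀ d : ℤ, d ≠ 0 → ∀ᶠ i in U, IsCoprime (a i) d := fun d hd =>
    eventually_isCoprime_of_forall_prime_not_dvd hα hd
  obtain ⟨r, hrK, hr, hr1⟩ := Submodule.exists_retraction_of_disjoint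
    (Ideal.baer_infinitelyDivisible (Germ (U : Filter ι) ℤ)) disjoint_infinitelyDivisible_span_one
  obtain ⟨θ, hθ⟩ := (Ideal.infinitelyDivisible _).exists_addEquiv_of_mul_bijective_mod
    r.toAddMonoidHom hrK hr (fun _ => mem_infinitelyDivisible_of_mul_mem ha)
    (exists_sub_mul_mem_infinitelyDivisible hU ha)
  refine ⟨θ, ?_⟩
  rw [hθ, LinearMap.toAddMonoidHom_coe, hr1 1 (Submodule.mem_span_singleton_self 1)]
  ring

end Ultrapower

section GermModule

variable {ι κ R M N : Type*} (l : Filter ι) [Semiring R] [AddCommMonoid M] [Module R M]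
  [AddCommMonoid N] [Module R N]

theorem Filter.Germ.const_sum (s : Finset κ) (f : κ → M) :
    (↑(∑ k ∈ s, f k) : Germ l M) = ∑ k ∈ s, (↑(f k) : Germ l M) :=
  map_sum ((Germ.coeAddHom l).comp (Pi.constAddMonoidHom ι M)) f s

def Filter.Germ.mapLinearEquiv (e : M ≃ₗ[R] N) : Germ l M ≃ₗ[Germ l R] Germ l N where
  toFun := Germ.map e
  invFun := Germ.map e.symm
  map_add' x y := Germ.inductionOn₂ x y fun f g =>
    congrArg Germ.ofFun (funext fun i => map_add e (f i) (g i))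
  map_smul' c x := Germ.inductionOn₂ c x fun c f =>
    congrArg Germ.ofFun (funext fun i => map_smul e (c i) (f i))
  left_inv x := Germ.inductionOn x fun f =>
    congrArg Germ.ofFun (funext fun i => e.symm_apply_apply (f i))
  right_inv x := Germ.inductionOn x fun f =>
    congrArg Germ.ofFun (funext fun i => e.apply_symm_apply (f i))

noncomputable def Filter.Germ.piLinearEquiv (κ : Type*) [Finite κ] :
    Germ l (κ → R) ≃ₗ[Germ l R] (κ → Germ l R) :=
  LinearEquiv.ofBijective
    { toFun := fun x k => x.map (· k)
      map_add' := fun x y => funext fun _ => Germ.inductionOn₂ x y fun _ _ => rfl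
      map_smul' := fun c x => funext fun _ => Germ.inductionOn₂ c x fun _ _ => rfl } <| by
    refine ⟨fun x y h => ?_, fun c => ?_⟩
    · induction x, y using Germ.inductionOn₂ with | h f g => ?_
      refine Germ.coe_eq.2 ?_
      filter_upwards [eventually_all.2 fun k => Germ.coe_eq.1 (congrFun h k)] with i hi
      exact funext hi
    · have : ∀ k, ∃ f : ι → R, (f : Germ l R) = c k := fun k =>
        Germ.inductionOn (c k) fun f => ⟨f, rfl⟩
      choose f hf using this
      exact ⟨↑(fun i k => f k i), funext hf⟩

noncomputable def Module.Basis.germ [Finite κ] (v : Module.Basis κ R M) :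
    Module.Basis κ (Germ l R) (Germ l M) :=
  .ofEquivFun ((Germ.mapLinearEquiv l v.equivFun).trans (Germ.piLinearEquiv l κ))

theorem Module.Basis.germ_apply [Finite κ] (v : Module.Basis κ R M) (k : κ) :
    v.germ l k = ↑(v k) := by
  classical
  rw [Module.Basis.germ, Module.Basis.coe_ofEquivFun, LinearEquiv.symm_apply_eq]
  funext j
  show _ = (↑(v.equivFun (v k) j) : Germ l R)
  rw [Module.Basis.equivFun_self, Pi.single_apply, apply_ite (fun x : R => (x : Germ l R))]
  exact if_congr eq_comm rfl rfl

end GermModule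

theorem Module.Basis.exists_addEquiv_sum_smul {κ S M : Type*} [Ring S] [AddCommGroup M]
    [Module S M] [Fintype κ] (b : Module.Basis κ S M) (θ : κ → S ≃+ S) :
    ∃ Θ : M ≃+ M, ∀ c : κ → S, Θ (∑ k, c k • b k) = ∑ k, θ k (c k) • b k :=
  ⟨b.equivFun.toAddEquiv.trans ((AddEquiv.piCongrRight θ).trans b.equivFun.symm.toAddEquiv),
    fun c => by
      rw [← b.equivFun_symm_apply, ← b.equivFun_symm_apply]
      exact congrArg b.equivFun.symm
        (funext fun k => congrArg (θ k) (congrFun (b.equivFun.apply_symm_apply c) k))⟩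

/-- let `A` be free abelian of rank `n` with basis `v`, `A*` its ultrapower
over an ℵ₁-incomplete ultrafilter `D`, `B` a unimodular integer matrix, and
`α₁, …, αₙ ∈ ℤ*` divisible by no prime. Then there is a group automorphism `ψ` of `A*`
with `ψ(vᵢ) = Σ_k α_k b_{ik} v_k`. -/
theorem exists_automorphism_ultrapower
    {ι : Type} (U : Ultrafilter ι)
    (hU : ∃ f : ℕ → Set ι, (∀ m, f m ∈ U) ∧ (⋂ m, f m) = ∅)
    (n : ℕ) (A : Type) [AddCommGroup A] (v : Module.Basis (Fin n) ℤ A)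
    (B : Matrix (Fin n) (Fin n) ℤ) (hB : B.det = 1 ∨ B.det = -1)
    (α : Fin n → Germ (U : Filter ι) ℤ)
    (hα : ∀ (k : Fin n) (p : ℕ), p.Prime → ¬ ((p : Germ (U : Filter ι) ℤ) ∣ α k)) :
    ∃ ψ : Germ (U : Filter ι) A ≃+ Germ (U : Filter ι) A,
      ∀ i : Fin n,
        ψ (Germ.const (v i)) = ∑ k : Fin n, α k • (Germ.const (B i k • v k)) := by
  choose θ hθ using fun k => Germ.exists_addEquiv_int_apply_one hU (hα k)
  obtain ⟨Θ, hΘ⟩ := (v.germ (U : Filter ι)).exists_addEquiv_sum_smul θ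
  have hBT : IsUnit B.transpose.det := by rcases hB with h | h <;> simp [h]
  let eB := Matrix.toLinearEquiv v B.transpose hBT
  refine ⟨(Germ.mapLinearEquiv _ eB).toAddEquiv.trans Θ, fun i => ?_⟩
  have heB : (Germ.const (eB (v i)) : Germ (U : Filter ι) A)
      = ∑ k, (B i k : Germ (U : Filter ι) ℤ) • v.germ (U : Filter ι) k := by
    simp [eB, Matrix.toLin_self, Germ.const_sum, Germ.const_smul, Module.Basis.germ_apply,
      Int.cast_smul_eq_zsmul]
  calc Θ (Germ.const (eB (v i)))
      = ∑ k, θ k (B i k) • v.germ (U : Filter ι) k := by rw [heB, hΘ]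
    _ = ∑ k, α k • Germ.const (B i k • v k) := Finset.sum_congr rfl fun k _ => by
      rw [← zsmul_one, map_zsmul, hθ, Module.Basis.germ_apply, Germ.const_smul, smul_assoc,
        smul_comm]
end

section
/- Let d and e be coprime positive integers, and for each j let q_j be the product of the first j primes not dividing d. Then for every prime p, there exists J such that for all j ≥ J, p does not divide d + q_j·e. Consequently, in the ultrapower Z* over a non-principal ultrafilter on N, the element α = d + q*·e (where q* is the class of (q_j)) is divisible by no prime. -/
open Filter

/-- let `d, e` be coprime positive integers, `p` an increasing enumeration of
the primes not dividing `d`, and `q j` the product of the first `j` such primes. Then for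
every prime `r` there is `J` with `r ∤ d + q j * e` for all `j ≥ J`; consequently, in the
ultrapower `ℤ*` over a non-principal ultrafilter on `ℕ`, the element `d + q* e` is
divisible by no prime. -/
theorem no_prime_divides_eventually
    (d e : ℕ) (hd : 0 < d) (he : 0 < e) (hde : Nat.Coprime d e)
    (p : ℕ → ℕ) (hmono : StrictMono p)
    (hp : ∀ j, (p j).Prime ∧ ¬ p j ∣ d)
    (hall : ∀ r : ℕ, r.Prime → ¬ r ∣ d → ∃ j, p j = r)
    (q : ℕ → ℕ) (hq : ∀ j, q j = ∏ i ∈ Finset.range j, p i)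
    (U : Ultrafilter ℕ) (hU : (Filter.cofinite : Filter ℕ) ≤ (U : Filter ℕ)) :
    (∀ r : ℕ, r.Prime → ∃ J : ℕ, ∀ j ≥ J, ¬ r ∣ (d + q j * e)) ∧
    (∀ r : ℕ, r.Prime →
      ¬ ((r : Germ (U : Filter ℕ) ℤ) ∣
          Germ.ofFun (fun j => ((d + q j * e : ℕ) : ℤ)))) := by
  have main : ∀ r : ℕ, r.Prime → ∃ J : ℕ, ∀ j ≥ J, ¬ r ∣ (d + q j * e) := by
    intro r hr
    by_cases hrd : r ∣ d
    · refine ⟨0, fun j _ hdiv => ?_⟩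
      have hre : ¬ r ∣ e := fun h =>
        Nat.Prime.one_lt hr |>.ne' (Nat.eq_one_of_dvd_coprimes hde hrd h)
      have hrq : ¬ r ∣ q j := by
        rw [hq]
        intro h
        obtain ⟨i, _, hdvd⟩ := (Prime.dvd_finset_prod_iff hr.prime p).mp h
        have : r = p i := (Nat.prime_dvd_prime_iff_eq hr (hp i).1).mp hdvd
        exact (hp i).2 (this ▸ hrd)
      have hqe : r ∣ q j * e := (Nat.dvd_add_right hrd).mp hdiv
      rcases hr.prime.dvd_mul.mp hqe with h | h
      · exact hrq h
      · exact hre h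
    · obtain ⟨j0, hj0⟩ := hall r hr hrd
      refine ⟨j0 + 1, fun j hj hdiv => ?_⟩
      have hrq : r ∣ q j := by
        rw [hq, ← hj0]
        exact Finset.dvd_prod_of_mem p (Finset.mem_range.mpr (by omega))
      have : r ∣ d := by
        have := Nat.dvd_sub hdiv (hrq.mul_right e)
        simpa using this
      exact hrd this
  refine ⟨main, fun r hr hdvd => ?_⟩
  obtain ⟨J, hJ⟩ := main r hr
  obtain ⟨c, hc⟩ := hdvd
  induction c using Germ.inductionOn with
  | h g =>
    have hc' : (fun j => ((d + q j * e : ℕ) : ℤ)) =ᶠ[(U : Filter ℕ)]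
        (fun j => (r : ℤ) * g j) := by
      refine Germ.coe_eq.mp ?_
      rw [hc, ← Germ.natCast_def, ← Germ.coe_mul]
      rfl
    have hge : ∀ᶠ j in (U : Filter ℕ), J ≤ j := by
      have h2 : {j : ℕ | J ≤ j}ᶜ ∉ (U : Filter ℕ) := by
        intro hmem
        have h3 := hU hmem
        rw [Filter.mem_cofinite, compl_compl] at h3
        exact (Set.Ici_infinite J) (by simpa [Set.Ici] using h3)
      exact Ultrafilter.compl_notMem_iff.mp h2
    have := (hc'.and hge).exists
    obtain ⟨j, hj1, hj2⟩ := this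
    have : (r : ℤ) ∣ ((d + q j * e : ℕ) : ℤ) := ⟨g j, hj1⟩
    exact hJ j hj2 (Int.natCast_dvd_natCast.mp this)
end
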